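/- The family consisting of the 3(n−6) vectors e_1−e_2+e_j, e_2−e_3+e_j, −e_1+e_3+e_j for 4 ≤ j ≤ n−3, together with the four vectors with support {1,2,3} and sign patterns (1,1,1), (1,−1,−1), (−1,1,−1), (−1,−1,1), is an independent set of size 3n−14 in G_n for n ≥ 7. -/

import Mathlib

/-!
Label the snakes by pairs `(j, s)` with `s : Fin 3` and the quad vectors by `s : Fin 4`. Every
labelled vector has squared norm `3`, and the scalar product of two vectors with distinct labels
lies in `{-2, -1, 0, 2}`. So distinct labels give distinct vectors, which counts the family as
`3 (n - 6) + 4`, and no two members have scalar product `1`.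
-/

/-- The vertex set of the graph `G_n`: vectors in `{-1,0,1}^n` with exactly three
nonzero coordinates. -/
def Gvert (n : ℕ) : Type :=
  {v : Fin n → ℤ // (∀ i, v i = -1 ∨ v i = 0 ∨ v i = 1) ∧
    (Finset.univ.filter (fun i => v i ≠ 0)).card = 3}

/-- The graph `G_n`: two such vectors are adjacent iff their scalar product is `1`. -/
def G (n : ℕ) : SimpleGraph (Gvert n) where
  Adj u v := u ≠ v ∧ ∑ i, u.1 i * v.1 i = 1
  symm := by
    refine ⟨?_⟩
    rintro u v ⟨h1, h2⟩
    exact ⟨h1.symm, (Finset.sum_congr rfl fun i _ => mul_comm _ _).trans h2⟩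
  loopless := by refine ⟨?_⟩; rintro u ⟨h1, -⟩; exact h1 rfl

/-- A set of vertices is independent if no two of its members are adjacent. -/
def IsIndep {V : Type*} (H : SimpleGraph V) (s : Set V) : Prop :=
  s.Pairwise fun u v => ¬ H.Adj u v

/-- The constant `c(n)` from the paper. -/
def c (n : ℕ) : ℕ := if n % 4 = 0 then 0 else if n % 4 = 1 then 1 else 2

/-- The vector supported on distinct coordinates `a, b, c` with values `x, y, z`. -/
def vec3 {n : ℕ} (a b c : Fin n) (x y z : ℤ) : Fin n → ℤ :=
  fun i => if i = a then x else if i = b then y else if i = c then z else 0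

open Finset Matrix

section vec3

variable {n : ℕ} {a b c : Fin n} {x y z : ℤ}

lemma vec3_dotProduct (hab : a ≠ b) (hac : a ≠ c) (hbc : b ≠ c) (w : Fin n → ℤ) :
    vec3 a b c x y z ⬝ᵥ w = x * w a + y * w b + z * w c := by
  rw [dotProduct, ← sum_subset (subset_univ {a, b, c}) fun i _ hi => by
    simp only [mem_insert, mem_singleton, not_or] at hi
    simp [vec3, hi.1, hi.2.1, hi.2.2]]
  rw [sum_insert (by simp [hab, hac]), sum_insert (by simp [hbc]), sum_singleton]
  simp [vec3, hab.symm, hac.symm, hbc.symm]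
  ring

lemma filter_vec3_ne_zero (hx : x ≠ 0) (hy : y ≠ 0) (hz : z ≠ 0) :
    Finset.univ.filter (fun i => vec3 a b c x y z i ≠ 0) = ({a, b, c} : Finset (Fin n)) := by
  ext i
  simp only [mem_filter, mem_univ, true_and, mem_insert, mem_singleton]
  unfold vec3
  split_ifs <;> simp_all

lemma vec3_signs_and_card_support (hab : a ≠ b) (hac : a ≠ c) (hbc : b ≠ c)
    (hx : x = -1 ∨ x = 1) (hy : y = -1 ∨ y = 1) (hz : z = -1 ∨ z = 1) :
    (∀ i, vec3 a b c x y z i = -1 ∨ vec3 a b c x y z i = 0 ∨ vec3 a b c x y z i = 1) ∧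
      (Finset.univ.filter fun i => vec3 a b c x y z i ≠ 0).card = 3 := by
  refine ⟨fun i => ?_, ?_⟩
  · unfold vec3
    split_ifs <;> tauto
  · rw [filter_vec3_ne_zero (by omega) (by omega) (by omega)]
    simp [hab, hac, hbc]

end vec3

section cobra

variable {n : ℕ}

def cobraVec (p q r : Fin n) : (Fin n × Fin 3) ⊕ Fin 4 → Fin n → ℤ
  | .inl (j, 0) => vec3 p q j 1 (-1) 1
  | .inl (j, 1) => vec3 q r j 1 (-1) 1
  | .inl (j, 2) => vec3 p r j (-1) 1 1
  | .inr 0 => vec3 p q r 1 1 1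
  | .inr 1 => vec3 p q r 1 (-1) (-1)
  | .inr 2 => vec3 p q r (-1) 1 (-1)
  | .inr 3 => vec3 p q r (-1) (-1) 1

def cobraIndex (J : Finset (Fin n)) : Finset ((Fin n × Fin 3) ⊕ Fin 4) :=
  (J ×ˢ univ).disjSum univ

lemma card_cobraIndex (J : Finset (Fin n)) : (cobraIndex J).card = 3 * J.card + 4 := by
  simp [cobraIndex, mul_comm]

variable {p q r : Fin n} {J : Finset (Fin n)} {i k : (Fin n × Fin 3) ⊕ Fin 4}

lemma cobraVec_signs_and_card_support (hpq : p ≠ q) (hpr : p ≠ r) (hqr : q ≠ r)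
    (hJ : ∀ j ∈ J, j ≠ p ∧ j ≠ q ∧ j ≠ r) (hi : i ∈ cobraIndex J) :
    (∀ l, cobraVec p q r i l = -1 ∨ cobraVec p q r i l = 0 ∨ cobraVec p q r i l = 1) ∧
      (Finset.univ.filter fun l => cobraVec p q r i l ≠ 0).card = 3 := by
  rcases i with ⟨j, s⟩ | s
  · obtain ⟨hjp, hjq, hjr⟩ := hJ j (by simpa [cobraIndex] using hi)
    fin_cases s <;> apply vec3_signs_and_card_support <;> simp [*, Ne.symm]
  · fin_cases s <;> apply vec3_signs_and_card_support <;> simp [*]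

lemma cobraVec_dotProduct_self (hpq : p ≠ q) (hpr : p ≠ r) (hqr : q ≠ r)
    (hJ : ∀ j ∈ J, j ≠ p ∧ j ≠ q ∧ j ≠ r) (hi : i ∈ cobraIndex J) :
    cobraVec p q r i ⬝ᵥ cobraVec p q r i = 3 := by
  rcases i with ⟨j, s⟩ | s
  · obtain ⟨hjp, hjq, hjr⟩ := hJ j (by simpa [cobraIndex] using hi)
    fin_cases s <;> simp [cobraVec, vec3_dotProduct, vec3, *, Ne.symm]
  · fin_cases s <;> simp [cobraVec, vec3_dotProduct, vec3, *, Ne.symm]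

lemma cobraVec_dotProduct_of_ne (hpq : p ≠ q) (hpr : p ≠ r) (hqr : q ≠ r)
    (hJ : ∀ j ∈ J, j ≠ p ∧ j ≠ q ∧ j ≠ r) (hi : i ∈ cobraIndex J) (hk : k ∈ cobraIndex J)
    (hik : i ≠ k) :
    cobraVec p q r i ⬝ᵥ cobraVec p q r k ∈ ({-2, -1, 0, 2} : Finset ℤ) := by
  rcases i with ⟨j, s⟩ | s <;> rcases k with ⟨k, t⟩ | t
  · obtain ⟨hjp, hjq, hjr⟩ := hJ j (by simpa [cobraIndex] using hi)
    obtain ⟨hkp, hkq, hkr⟩ := hJ k (by simpa [cobraIndex] using hk)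
    by_cases hjk : j = k
    · subst hjk
      fin_cases s <;> fin_cases t <;> simp_all [cobraVec, vec3_dotProduct, vec3, Ne.symm]
    · fin_cases s <;> fin_cases t <;> simp [cobraVec, vec3_dotProduct, vec3, *, Ne.symm]
  · obtain ⟨hjp, hjq, hjr⟩ := hJ j (by simpa [cobraIndex] using hi)
    fin_cases s <;> fin_cases t <;> simp [cobraVec, vec3_dotProduct, vec3, *, Ne.symm]
  · obtain ⟨hkp, hkq, hkr⟩ := hJ k (by simpa [cobraIndex] using hk)
    fin_cases s <;> fin_cases t <;> simp [cobraVec, vec3_dotProduct, vec3, *, Ne.symm]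
  · fin_cases s <;> fin_cases t <;> simp_all [cobraVec, vec3_dotProduct, vec3, Ne.symm]

lemma injOn_cobraVec (hpq : p ≠ q) (hpr : p ≠ r) (hqr : q ≠ r)
    (hJ : ∀ j ∈ J, j ≠ p ∧ j ≠ q ∧ j ≠ r) : Set.InjOn (cobraVec p q r) (cobraIndex J) := by
  intro i hi k hk hik
  by_contra hne
  have h := cobraVec_dotProduct_of_ne hpq hpr hqr hJ hi hk hne
  rw [← hik, cobraVec_dotProduct_self hpq hpr hqr hJ hi] at h
  simp at h

end cobra

lemma card_filter_val_mem_Icc {n lo hi : ℕ} (h : hi < n) :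
    (Finset.univ.filter fun j : Fin n => lo ≤ (j : ℕ) ∧ (j : ℕ) ≤ hi).card = hi + 1 - lo := by
  rw [← Nat.card_Icc, ← card_map Fin.valEmbedding]
  congr 1
  ext m
  simp only [mem_map, mem_filter, mem_univ, true_and, Fin.valEmbedding_apply, mem_Icc]
  exact ⟨by rintro ⟨j, hj, rfl⟩; exact hj, fun hm => ⟨⟨m, by omega⟩, hm, rfl⟩⟩

/-- Coordinates are `0`-indexed: `a, b, c'` stand for `e₁, e₂, e₃`, and `3 ≤ j ≤ n - 4` for
`4 ≤ j ≤ n - 3`. -/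
theorem cobra_indep (n : ℕ) (hn : 7 ≤ n) :
    let a : Fin n := ⟨0, by omega⟩
    let b : Fin n := ⟨1, by omega⟩
    let c' : Fin n := ⟨2, by omega⟩
    let S : Set (Fin n → ℤ) :=
      (⋃ j ∈ {j : Fin n | 3 ≤ (j : ℕ) ∧ (j : ℕ) ≤ n - 4},
        {vec3 a b j 1 (-1) 1, vec3 b c' j 1 (-1) 1, vec3 a c' j (-1) 1 1}) ∪
      {vec3 a b c' 1 1 1, vec3 a b c' 1 (-1) (-1),
        vec3 a b c' (-1) 1 (-1), vec3 a b c' (-1) (-1) 1}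
    (∀ v ∈ S, (∀ i, v i = -1 ∨ v i = 0 ∨ v i = 1) ∧
      (Finset.univ.filter fun i => v i ≠ 0).card = 3) ∧
    S.ncard = 3 * n - 14 ∧
    (∀ u ∈ S, ∀ v ∈ S, u ≠ v → ∑ i, u i * v i ≠ 1) := by
  intro a b c' S
  set J := Finset.univ.filter fun j : Fin n => 3 ≤ (j : ℕ) ∧ (j : ℕ) ≤ n - 4
  have hab : a ≠ b := by simp [a, b, Fin.ext_iff]
  have hac : a ≠ c' := by simp [a, c', Fin.ext_iff]
  have hbc : b ≠ c' := by simp [b, c', Fin.ext_iff]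
  have hJ : ∀ j ∈ J, j ≠ a ∧ j ≠ b ∧ j ≠ c' := by
    intro j hj
    simp only [J, mem_filter, mem_univ, true_and] at hj
    simp only [a, b, c', ne_eq, Fin.ext_iff]
    omega
  have hS : S = cobraVec a b c' '' (cobraIndex J) := by
    ext v
    simp [S, J, cobraIndex, Sum.exists, Fin.exists_fin_succ, cobraVec, @eq_comm _ _ v, or_comm,
      or_assoc]
  rw [hS]
  refine ⟨?_, ?_, ?_⟩
  · rintro _ ⟨i, hi, rfl⟩
    exact cobraVec_signs_and_card_support hab hac hbc hJ hi
  · rw [(injOn_cobraVec hab hac hbc hJ).ncard_image, Set.ncard_coe_finset,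
      card_cobraIndex, card_filter_val_mem_Icc (by omega)]
    omega
  · rintro _ ⟨i, hi, rfl⟩ _ ⟨k, hk, rfl⟩ hne h
    have hdot := cobraVec_dotProduct_of_ne hab hac hbc hJ hi hk (ne_of_apply_ne _ hne)
    rw [dotProduct, h] at hdot
    simp at hdot
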